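/- Let a₁, a₂, a₃ be strictly positive real numbers and let T(a) := a₁σ^el₁σ^n₁ + a₂σ^el₂σ^n₂ + a₃σ^el₃σ^n₃. Then T(a) is Hermitian, −(a₁ + a₂ + a₃) is an eigenvalue of T(a) whose eigenspace is one-dimensional, and every other eigenvalue μ of T(a) satisfies μ ≥ −(a₁ + a₂ + a₃) + 2·min(a₁ + a₂, a₂ + a₃, a₃ + a₁), where 2·min(a₁ + a₂, a₂ + a₃, a₃ + a₁) > 0. -/

import Mathlib

open Matrix

/-- The electron spin matrices `σ^el_j = σ_j ⊗ I₂` as explicit 4×4 complex matrices. -/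
noncomputable def sigmaEl : Fin 3 → Matrix (Fin 4) (Fin 4) ℂ
  | 0 => !![0,0,1,0; 0,0,0,1; 1,0,0,0; 0,1,0,0]
  | 1 => !![0,0,-Complex.I,0; 0,0,0,-Complex.I; Complex.I,0,0,0; 0,Complex.I,0,0]
  | 2 => !![1,0,0,0; 0,1,0,0; 0,0,-1,0; 0,0,0,-1]

/-- The nucleus spin matrices `σ^n_j = I₂ ⊗ σ_j` as explicit 4×4 complex matrices. -/
noncomputable def sigmaN : Fin 3 → Matrix (Fin 4) (Fin 4) ℂ
  | 0 => !![0,1,0,0; 1,0,0,0; 0,0,0,1; 0,0,1,0]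
  | 1 => !![0,-Complex.I,0,0; Complex.I,0,0,0; 0,0,0,-Complex.I; 0,0,Complex.I,0]
  | 2 => !![1,0,0,0; 0,-1,0,0; 0,0,1,0; 0,0,0,-1]

/-- `T(a) = a₁ σ^el₁σ^n₁ + a₂ σ^el₂σ^n₂ + a₃ σ^el₃σ^n₃` for real coefficients. -/
noncomputable def Tmat (a : Fin 3 → ℝ) : Matrix (Fin 4) (Fin 4) ℂ :=
  (a 0 : ℂ) • (sigmaEl 0 * sigmaN 0) + (a 1 : ℂ) • (sigmaEl 1 * sigmaN 1) +
    (a 2 : ℂ) • (sigmaEl 2 * sigmaN 2)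

/-!
In the Bell basis ψ⁻, ψ⁺, φ⁺, φ⁻ each `σ_j ⊗ σ_j` is diagonal with entries `±1`, so `T(a)` is
diagonal with entries `-(a₁ + a₂ + a₃)` and `-(a₁ + a₂ + a₃) + 2 (aᵢ + aⱼ)` for the three pairs
`i ≠ j`. With positive coefficients the singlet ψ⁻ is therefore the unique ground state, and the
gap is twice the smallest pair sum.
-/

open Module.End in
lemma eigenspace_toLin_diagonal {n R M : Type*} [Fintype n] [DecidableEq n] [CommRing R]
    [IsDomain R] [AddCommGroup M] [Module R M] (b : Module.Basis n R M) (d : n → R) (μ : R) :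
    eigenspace (toLin b b (diagonal d)) μ = Submodule.span R (b '' {i | d i = μ}) := by
  refine le_antisymm (fun x hx => ?_) (Submodule.span_le.2 ?_)
  · rw [b.mem_span_image]
    intro i hi
    have h := congrArg (fun y => b.repr y i) (mem_eigenspace_iff.1 hx)
    rw [← LinearMap.toMatrix_mulVec_repr b b, LinearMap.toMatrix_toLin, mulVec_diagonal,
      map_smul, Finsupp.smul_apply, smul_eq_mul] at h
    exact mul_right_cancel₀ (Finsupp.mem_support_iff.1 hi) h
  · rintro _ ⟨i, rfl, rfl⟩
    exact (hasEigenvector_toLin_diagonal d i b).1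

lemma toLin_diagonal_eq_of_apply_basis {n R M : Type*} [Fintype n] [DecidableEq n] [CommRing R]
    [AddCommGroup M] [Module R M] (b : Module.Basis n R M) (d : n → R) (f : Module.End R M)
    (hf : ∀ i, f (b i) = d i • b i) : toLin b b (diagonal d) = f :=
  b.ext fun i => by simp [Matrix.toLin_self, diagonal_apply, hf]

-- Columns: ψ⁻, ψ⁺, φ⁺, φ⁻ (unnormalized).
def bellMatrix : Matrix (Fin 4) (Fin 4) ℂ := !![0,0,1,1; 1,1,0,0; -1,1,0,0; 0,0,1,-1]

lemma conjTranspose_bellMatrix_mul : bellMatrixᴴ * bellMatrix = (2 : ℂ) • 1 := by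
  ext i j
  fin_cases i <;> fin_cases j <;>
    simp [bellMatrix, Matrix.mul_apply, Fin.sum_univ_four, one_add_one_eq_two]

noncomputable instance : Invertible bellMatrix :=
  invertibleOfLeftInverse _ ((2 : ℂ)⁻¹ • bellMatrixᴴ) <| by
    rw [smul_mul_assoc, conjTranspose_bellMatrix_mul, smul_smul, inv_mul_cancel₀ two_ne_zero,
      one_smul]

noncomputable def bellBasis : Module.Basis (Fin 4) ℂ (Fin 4 → ℂ) :=
  (Pi.basisFun ℂ (Fin 4)).map (bellMatrix.toLinearEquiv' inferInstance)

lemma bellBasis_apply (i : Fin 4) : bellBasis i = bellMatrix.col i := by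
  simp [bellBasis, Matrix.toLinearEquiv']

lemma Tmat_eq (a : Fin 3 → ℝ) : Tmat a =
    !![(a 2 : ℂ), 0, 0, (a 0 : ℂ) - a 1;
       0, -(a 2 : ℂ), (a 0 : ℂ) + a 1, 0;
       0, (a 0 : ℂ) + a 1, -(a 2 : ℂ), 0;
       (a 0 : ℂ) - a 1, 0, 0, (a 2 : ℂ)] := by
  ext i j
  fin_cases i <;> fin_cases j <;> simp [Tmat, sigmaEl, sigmaN] <;> ring

lemma Tmat_isHermitian (a : Fin 3 → ℝ) : (Tmat a).IsHermitian := by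
  rw [IsHermitian, Tmat_eq]
  ext i j
  fin_cases i <;> fin_cases j <;> simp

def bellEnergy (a : Fin 3 → ℝ) : Fin 4 → ℝ :=
  ![-(a 0 + a 1 + a 2), a 0 + a 1 - a 2, a 2 + a 0 - a 1, a 1 + a 2 - a 0]

lemma Tmat_mulVecLin_eq_toLin_diagonal (a : Fin 3 → ℝ) :
    (Tmat a).mulVecLin = toLin bellBasis bellBasis (diagonal fun i => (bellEnergy a i : ℂ)) := by
  refine (toLin_diagonal_eq_of_apply_basis _ _ _ fun i => ?_).symm
  ext j
  fin_cases i <;> fin_cases j <;>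
    simp [Tmat_eq, bellBasis_apply, bellMatrix, bellEnergy, mulVec, dotProduct,
      Fin.sum_univ_four] <;> ring

lemma bellEnergy_ge_of_ne_zero (a : Fin 3 → ℝ) {i : Fin 4} (hi : i ≠ 0) :
    -(a 0 + a 1 + a 2) + 2 * min (a 0 + a 1) (min (a 1 + a 2) (a 2 + a 0)) ≤ bellEnergy a i := by
  have h₁ := min_le_left (a 0 + a 1) (min (a 1 + a 2) (a 2 + a 0))
  have h₂ := min_le_right (a 0 + a 1) (min (a 1 + a 2) (a 2 + a 0))
  have h₃ := min_le_left (a 1 + a 2) (a 2 + a 0)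
  have h₄ := min_le_right (a 1 + a 2) (a 2 + a 0)
  fin_cases i <;> simp [bellEnergy] at hi ⊢ <;> linarith

theorem Tmat_ground_state_gap (a : Fin 3 → ℝ) (ha : ∀ j, 0 < a j) :
    (Tmat a).IsHermitian ∧
    Module.End.HasEigenvalue (Tmat a).mulVecLin (-(a 0 + a 1 + a 2) : ℂ) ∧
    Module.finrank ℂ
      (Module.End.eigenspace (Tmat a).mulVecLin (-(a 0 + a 1 + a 2) : ℂ)) = 1 ∧
    0 < 2 * min (a 0 + a 1) (min (a 1 + a 2) (a 2 + a 0)) ∧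
    ∀ μ : ℂ, Module.End.HasEigenvalue (Tmat a).mulVecLin μ →
      μ ≠ (-(a 0 + a 1 + a 2) : ℂ) →
      ∃ x : ℝ, μ = (x : ℂ) ∧
        -(a 0 + a 1 + a 2) + 2 * min (a 0 + a 1) (min (a 1 + a 2) (a 2 + a 0)) ≤ x := by
  have hgap : 0 < 2 * min (a 0 + a 1) (min (a 1 + a 2) (a 2 + a 0)) :=
    mul_pos two_pos <|
      lt_min (add_pos (ha 0) (ha 1)) (lt_min (add_pos (ha 1) (ha 2)) (add_pos (ha 2) (ha 0)))
  have hground : ((bellEnergy a 0 : ℝ) : ℂ) = (-(a 0 + a 1 + a 2) : ℂ) := by simp [bellEnergy]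
  have hunique : {i | (bellEnergy a i : ℂ) = -(a 0 + a 1 + a 2)} = {0} := by
    refine Set.eq_singleton_iff_unique_mem.2 ⟨hground, fun i hi => by_contra fun hi0 => ?_⟩
    have hi' : bellEnergy a i = -(a 0 + a 1 + a 2) := by exact_mod_cast hi
    linarith [bellEnergy_ge_of_ne_zero a hi0]
  rw [Tmat_mulVecLin_eq_toLin_diagonal]
  refine ⟨Tmat_isHermitian a, (hasEigenvalue_toLin_diagonal_iff _ _).2 ⟨0, hground⟩,
    ?_, hgap, fun μ hμ hne => ?_⟩
  · rw [eigenspace_toLin_diagonal, hunique, Set.image_singleton,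
      finrank_span_singleton (bellBasis.ne_zero 0)]
  · obtain ⟨i, rfl⟩ := (hasEigenvalue_toLin_diagonal_iff _ _).1 hμ
    exact ⟨_, rfl, bellEnergy_ge_of_ne_zero a fun hi => hne (hi ▸ hground)⟩
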